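/- Let B be the graph obtained from the Petersen graph by deleting two adjacent vertices u and v, and let a₁, a₂ be the two neighbors of u other than v, and b₁, b₂ the two neighbors of v other than u (all in the Petersen graph). Then in every proper 3-edge-coloring of B extended by assigning colors to four pendant semiedges at a₁, a₂, b₁, b₂ (i.e., every proper 3-edge-coloring of the multigraph B together with one extra pendant edge at each of a₁, a₂, b₁, b₂), the pendant edges at a₁ and a₂ receive the same color, and the pendant edges at b₁ and b₂ receive the same color. -/

import Mathlib

open SimpleGraph

/-- A proper 3-edge-coloring of `G`: distinct edges of `G` sharing a vertex get distinct colors. -/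
def IsProper3EdgeColoring {V : Type*} (G : SimpleGraph V) (phi : Sym2 V → Fin 3) : Prop :=
  ∀ e₁ ∈ G.edgeSet, ∀ e₂ ∈ G.edgeSet, e₁ ≠ e₂ → (∃ v, v ∈ e₁ ∧ v ∈ e₂) → phi e₁ ≠ phi e₂

/-- `G` is cubic: every vertex has exactly 3 neighbors. -/
def IsCubic {V : Type*} (G : SimpleGraph V) : Prop :=
  ∀ v : V, (G.neighborSet v).ncard = 3

/-- The edge cut determined by a vertex subset `S`: edges with exactly one endpoint in `S`. -/
def edgeCut {V : Type*} (G : SimpleGraph V) (S : Set V) : Set (Sym2 V) :=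
  {e | e ∈ G.edgeSet ∧ ∃ u v, e = s(u, v) ∧ u ∈ S ∧ v ∉ S}

/-- Vertices of the Petersen graph: 2-element subsets of a 5-element set. -/
abbrev PetersenVertex : Type := {s : Finset (Fin 5) // s.card = 2}

/-- The Petersen graph as the Kneser graph K(5,2). -/
def Petersen : SimpleGraph PetersenVertex where
  Adj a b := Disjoint a.1 b.1
  symm := ⟨fun _ _ h => h.symm⟩
  loopless := ⟨by
    intro a h
    rw [disjoint_self] at h
    simpa [h] using a.2⟩

/-- The 4-pole `B⁺`: the Petersen graph minus the adjacent vertices `u, v`, with a pendant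
edge attached at each of `a₁, a₂` (the other neighbors of `u`) and `b₁, b₂` (the other
neighbors of `v`); the pendant vertices are `Sum.inr 0, 1, 2, 3` respectively. -/
def Bplus (u v a₁ a₂ b₁ b₂ : PetersenVertex) : SimpleGraph (PetersenVertex ⊕ Fin 4) :=
  SimpleGraph.fromRel (fun x y =>
    (∃ p q : PetersenVertex, x = Sum.inl p ∧ y = Sum.inl q ∧ Petersen.Adj p q ∧
      p ≠ u ∧ p ≠ v ∧ q ≠ u ∧ q ≠ v) ∨
    (x = Sum.inl a₁ ∧ y = Sum.inr 0) ∨ (x = Sum.inl a₂ ∧ y = Sum.inr 1) ∨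
    (x = Sum.inl b₁ ∧ y = Sum.inr 2) ∨ (x = Sum.inl b₂ ∧ y = Sum.inr 3))

def other (a b : Fin 3) : Fin 3 := -(a+b)

theorem thirdEq {a b c : Fin 3} (h1 : a ≠ b) (h2 : c ≠ a) (h3 : c ≠ b) : c = other a b := by
  revert h1 h2 h3; revert a b c; decide

lemma key {V : Type*} {G : SimpleGraph V} {phi : Sym2 V → Fin 3}
    (h : IsProper3EdgeColoring G phi) {x y z : V} (hxy : G.Adj x y) (hxz : G.Adj x z)
    (hyz : y ≠ z) : phi s(x,y) ≠ phi s(x,z) := by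
  refine h _ (G.mem_edgeSet.2 hxy) _ (G.mem_edgeSet.2 hxz) ?_ ⟨x, ?_, ?_⟩
  · intro he
    rcases Sym2.eq_iff.1 he with ⟨-, h2⟩ | ⟨h1, -⟩
    · exact hyz h2
    · exact G.irrefl (h1 ▸ hxz)
  · exact Sym2.mem_mk_left x y
  · exact Sym2.mem_mk_left x z

lemma keyB {V : Type*} {G : SimpleGraph V} {phi : Sym2 V → Fin 3}
    (h : IsProper3EdgeColoring G phi) {x y z : V} (hxy : G.Adj x y) (hxz : G.Adj x z)
    (hyz : y ≠ z) : phi s(y,x) ≠ phi s(x,z) := by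
  rw [Sym2.eq_swap (a := y) (b := x)]; exact key h hxy hxz hyz

lemma keyC {V : Type*} {G : SimpleGraph V} {phi : Sym2 V → Fin 3}
    (h : IsProper3EdgeColoring G phi) {x y z : V} (hxy : G.Adj x y) (hxz : G.Adj x z)
    (hyz : y ≠ z) : phi s(y,x) ≠ phi s(z,x) := by
  rw [Sym2.eq_swap (a := y) (b := x), Sym2.eq_swap (a := z) (b := x)]
  exact key h hxy hxz hyz

lemma pvNe1 {a b c d : Fin 5} {h1 : ({a,b} : Finset (Fin 5)).card = 2}
    {h2 : ({c,d} : Finset (Fin 5)).card = 2} (hac : a ≠ c) (had : a ≠ d) :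
    (⟨{a,b},h1⟩ : PetersenVertex) ≠ ⟨{c,d},h2⟩ := by
  intro h
  have h' : ({a,b} : Finset (Fin 5)) = {c,d} := congrArg Subtype.val h
  have : a ∈ ({c,d} : Finset (Fin 5)) := h' ▸ Finset.mem_insert_self a {b}
  simp only [Finset.mem_insert, Finset.mem_singleton] at this
  tauto

lemma pvNe2 {a b c d : Fin 5} {h1 : ({a,b} : Finset (Fin 5)).card = 2}
    {h2 : ({c,d} : Finset (Fin 5)).card = 2} (hbc : b ≠ c) (hbd : b ≠ d) :
    (⟨{a,b},h1⟩ : PetersenVertex) ≠ ⟨{c,d},h2⟩ := by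
  intro h
  have h' : ({a,b} : Finset (Fin 5)) = {c,d} := congrArg Subtype.val h
  have : b ∈ ({c,d} : Finset (Fin 5)) :=
    h' ▸ Finset.mem_insert_of_mem (Finset.mem_singleton_self b)
  simp only [Finset.mem_insert, Finset.mem_singleton] at this
  tauto

lemma pvAdj {a b c d : Fin 5} {h1 : ({a,b} : Finset (Fin 5)).card = 2}
    {h2 : ({c,d} : Finset (Fin 5)).card = 2}
    (hac : a ≠ c) (had : a ≠ d) (hbc : b ≠ c) (hbd : b ≠ d) :
    Petersen.Adj ⟨{a,b},h1⟩ ⟨{c,d},h2⟩ := by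
  show Disjoint ({a,b} : Finset (Fin 5)) {c,d}
  rw [Finset.disjoint_left]
  intro x hx hx'
  simp only [Finset.mem_insert, Finset.mem_singleton] at hx hx'
  rcases hx with rfl | rfl <;> rcases hx' with rfl | rfl <;> simp_all

lemma disjPair {p q r s : Fin 5}
    (h : Disjoint ({p,q} : Finset (Fin 5)) ({r,s} : Finset (Fin 5))) :
    p ≠ r ∧ p ≠ s ∧ q ≠ r ∧ q ≠ s := by
  rw [Finset.disjoint_left] at h
  refine ⟨fun e => ?_, fun e => ?_, fun e => ?_, fun e => ?_⟩ <;> subst e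
  · exact h (Finset.mem_insert_self p {q}) (Finset.mem_insert_self p {s})
  · exact h (Finset.mem_insert_self p {q})
      (Finset.mem_insert_of_mem (Finset.mem_singleton_self p))
  · exact h (Finset.mem_insert_of_mem (Finset.mem_singleton_self q))
      (Finset.mem_insert_self q {s})
  · exact h (Finset.mem_insert_of_mem (Finset.mem_singleton_self q))
      (Finset.mem_insert_of_mem (Finset.mem_singleton_self q))

lemma inlNe {x y : PetersenVertex} (h : x ≠ y) :
    (Sum.inl x : PetersenVertex ⊕ Fin 4) ≠ Sum.inl y := fun he => h (Sum.inl.inj he)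

lemma bplusAdj {u v a₁ a₂ b₁ b₂ x y : PetersenVertex} (h : Petersen.Adj x y)
    (h1 : x ≠ u) (h2 : x ≠ v) (h3 : y ≠ u) (h4 : y ≠ v) :
    (Bplus u v a₁ a₂ b₁ b₂).Adj (Sum.inl x) (Sum.inl y) := by
  rw [Bplus, SimpleGraph.fromRel_adj]
  exact ⟨fun he => h.ne (Sum.inl.inj he), Or.inl (Or.inl ⟨x, y, rfl, rfl, h, h1, h2, h3, h4⟩)⟩

lemma bplusPend0 {u v a₁ a₂ b₁ b₂ : PetersenVertex} :
    (Bplus u v a₁ a₂ b₁ b₂).Adj (Sum.inl a₁) (Sum.inr 0) := by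
  rw [Bplus, SimpleGraph.fromRel_adj]
  exact ⟨Sum.inl_ne_inr, Or.inl (Or.inr (Or.inl ⟨rfl, rfl⟩))⟩

lemma bplusPend1 {u v a₁ a₂ b₁ b₂ : PetersenVertex} :
    (Bplus u v a₁ a₂ b₁ b₂).Adj (Sum.inl a₂) (Sum.inr 1) := by
  rw [Bplus, SimpleGraph.fromRel_adj]
  exact ⟨Sum.inl_ne_inr, Or.inl (Or.inr (Or.inr (Or.inl ⟨rfl, rfl⟩)))⟩

lemma bplusPend2 {u v a₁ a₂ b₁ b₂ : PetersenVertex} :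
    (Bplus u v a₁ a₂ b₁ b₂).Adj (Sum.inl b₁) (Sum.inr 2) := by
  rw [Bplus, SimpleGraph.fromRel_adj]
  exact ⟨Sum.inl_ne_inr, Or.inl (Or.inr (Or.inr (Or.inr (Or.inl ⟨rfl, rfl⟩))))⟩

lemma bplusPend3 {u v a₁ a₂ b₁ b₂ : PetersenVertex} :
    (Bplus u v a₁ a₂ b₁ b₂).Adj (Sum.inl b₂) (Sum.inr 3) := by
  rw [Bplus, SimpleGraph.fromRel_adj]
  exact ⟨Sum.inl_ne_inr, Or.inl (Or.inr (Or.inr (Or.inr (Or.inr ⟨rfl, rfl⟩))))⟩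

set_option synthInstance.maxSize 5000 in
set_option maxHeartbeats 2000000 in
theorem core : ∀ x1 x2 x3 x4 x5 x6 x7 x8 x9 x10 : Fin 3,
    (x1 ≠ x2 ∧ x3 ≠ x4 ∧ x5 ≠ x6 ∧ x7 ≠ x8 ∧
    x3 ≠ x7 ∧ x3 ≠ x9 ∧ x7 ≠ x9 ∧
    x1 ≠ x8 ∧ x1 ≠ x10 ∧ x8 ≠ x10 ∧
    x4 ≠ x5 ∧ x4 ≠ x10 ∧ x5 ≠ x10 ∧
    x2 ≠ x6 ∧ x2 ≠ x9 ∧ x6 ≠ x9) →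
    other x1 x2 = other x3 x4 ∧ other x5 x6 = other x7 x8 := by decide

lemma main (u v a₁ a₂ b₁ b₂ : PetersenVertex) (p q r s w : Fin 5)
    (hpq : p≠q) (hpr : p≠r) (hps : p≠s) (hpw : p≠w) (hqr : q≠r) (hqs : q≠s)
    (hqw : q≠w) (hrs : r≠s) (hrw : r≠w) (hsw : s≠w)
    (hu : u = ⟨{p,q}, Finset.card_pair hpq⟩) (hv : v = ⟨{r,s}, Finset.card_pair hrs⟩)
    (hA1 : a₁ = ⟨{r,w}, Finset.card_pair hrw⟩) (hA2 : a₂ = ⟨{s,w}, Finset.card_pair hsw⟩)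
    (hB1 : b₁ = ⟨{p,w}, Finset.card_pair hpw⟩) (hB2 : b₂ = ⟨{q,w}, Finset.card_pair hqw⟩)
    (phi : Sym2 (PetersenVertex ⊕ Fin 4) → Fin 3)
    (hphi : IsProper3EdgeColoring (Bplus u v a₁ a₂ b₁ b₂) phi) :
    phi s(Sum.inl a₁, Sum.inr 0) = phi s(Sum.inl a₂, Sum.inr 1) ∧
    phi s(Sum.inl b₁, Sum.inr 2) = phi s(Sum.inl b₂, Sum.inr 3) := by
  subst hu hv hA1 hA2 hB1 hB2
  have neA1u : (⟨{r,w}, Finset.card_pair hrw⟩ : PetersenVertex) ≠ (⟨{p,q}, Finset.card_pair hpq⟩ : PetersenVertex) := pvNe1 hpr.symm hqr.symm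
  have neA1v : (⟨{r,w}, Finset.card_pair hrw⟩ : PetersenVertex) ≠ (⟨{r,s}, Finset.card_pair hrs⟩ : PetersenVertex) := pvNe2 hrw.symm hsw.symm
  have neA2u : (⟨{s,w}, Finset.card_pair hsw⟩ : PetersenVertex) ≠ (⟨{p,q}, Finset.card_pair hpq⟩ : PetersenVertex) := pvNe1 hps.symm hqs.symm
  have neA2v : (⟨{s,w}, Finset.card_pair hsw⟩ : PetersenVertex) ≠ (⟨{r,s}, Finset.card_pair hrs⟩ : PetersenVertex) := pvNe2 hrw.symm hsw.symm
  have neB1u : (⟨{p,w}, Finset.card_pair hpw⟩ : PetersenVertex) ≠ (⟨{p,q}, Finset.card_pair hpq⟩ : PetersenVertex) := pvNe2 hpw.symm hqw.symm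
  have neB1v : (⟨{p,w}, Finset.card_pair hpw⟩ : PetersenVertex) ≠ (⟨{r,s}, Finset.card_pair hrs⟩ : PetersenVertex) := pvNe1 hpr hps
  have neB2u : (⟨{q,w}, Finset.card_pair hqw⟩ : PetersenVertex) ≠ (⟨{p,q}, Finset.card_pair hpq⟩ : PetersenVertex) := pvNe2 hpw.symm hqw.symm
  have neB2v : (⟨{q,w}, Finset.card_pair hqw⟩ : PetersenVertex) ≠ (⟨{r,s}, Finset.card_pair hrs⟩ : PetersenVertex) := pvNe1 hqr hqs
  have neC1u : (⟨{p,r}, Finset.card_pair hpr⟩ : PetersenVertex) ≠ (⟨{p,q}, Finset.card_pair hpq⟩ : PetersenVertex) := pvNe2 hpr.symm hqr.symm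
  have neC1v : (⟨{p,r}, Finset.card_pair hpr⟩ : PetersenVertex) ≠ (⟨{r,s}, Finset.card_pair hrs⟩ : PetersenVertex) := pvNe1 hpr hps
  have neC2u : (⟨{p,s}, Finset.card_pair hps⟩ : PetersenVertex) ≠ (⟨{p,q}, Finset.card_pair hpq⟩ : PetersenVertex) := pvNe2 hps.symm hqs.symm
  have neC2v : (⟨{p,s}, Finset.card_pair hps⟩ : PetersenVertex) ≠ (⟨{r,s}, Finset.card_pair hrs⟩ : PetersenVertex) := pvNe1 hpr hps
  have neC3u : (⟨{q,r}, Finset.card_pair hqr⟩ : PetersenVertex) ≠ (⟨{p,q}, Finset.card_pair hpq⟩ : PetersenVertex) := pvNe2 hpr.symm hqr.symm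
  have neC3v : (⟨{q,r}, Finset.card_pair hqr⟩ : PetersenVertex) ≠ (⟨{r,s}, Finset.card_pair hrs⟩ : PetersenVertex) := pvNe1 hqr hqs
  have neC4u : (⟨{q,s}, Finset.card_pair hqs⟩ : PetersenVertex) ≠ (⟨{p,q}, Finset.card_pair hpq⟩ : PetersenVertex) := pvNe2 hps.symm hqs.symm
  have neC4v : (⟨{q,s}, Finset.card_pair hqs⟩ : PetersenVertex) ≠ (⟨{r,s}, Finset.card_pair hrs⟩ : PetersenVertex) := pvNe1 hqr hqs
  have badjA1C2 : (Bplus (⟨{p,q}, Finset.card_pair hpq⟩ : PetersenVertex) (⟨{r,s}, Finset.card_pair hrs⟩ : PetersenVertex) (⟨{r,w}, Finset.card_pair hrw⟩ : PetersenVertex) (⟨{s,w}, Finset.card_pair hsw⟩ : PetersenVertex) (⟨{p,w}, Finset.card_pair hpw⟩ : PetersenVertex) (⟨{q,w}, Finset.card_pair hqw⟩ : PetersenVertex)).Adj (Sum.inl (⟨{r,w}, Finset.card_pair hrw⟩ : PetersenVertex)) (Sum.inl (⟨{p,s}, Finset.card_pair hps⟩ : PetersenVertex)) := bplusAdj (pvAdj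 hpr.symm hrs hpw.symm hsw.symm) neA1u neA1v neC2u neC2v
  have badjA1C4 : (Bplus (⟨{p,q}, Finset.card_pair hpq⟩ : PetersenVertex) (⟨{r,s}, Finset.card_pair hrs⟩ : PetersenVertex) (⟨{r,w}, Finset.card_pair hrw⟩ : PetersenVertex) (⟨{s,w}, Finset.card_pair hsw⟩ : PetersenVertex) (⟨{p,w}, Finset.card_pair hpw⟩ : PetersenVertex) (⟨{q,w}, Finset.card_pair hqw⟩ : PetersenVertex)).Adj (Sum.inl (⟨{r,w}, Finset.card_pair hrw⟩ : PetersenVertex)) (Sum.inl (⟨{q,s}, Finset.card_pair hqs⟩ : PetersenVertex)) := bplusAdj (pvAdj hqr.symm hrs hqw.symm hsw.symm) neA1u neA1v neC4u neC4v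
  have badjA2C1 : (Bplus (⟨{p,q}, Finset.card_pair hpq⟩ : PetersenVertex) (⟨{r,s}, Finset.card_pair hrs⟩ : PetersenVertex) (⟨{r,w}, Finset.card_pair hrw⟩ : PetersenVertex) (⟨{s,w}, Finset.card_pair hsw⟩ : PetersenVertex) (⟨{p,w}, Finset.card_pair hpw⟩ : PetersenVertex) (⟨{q,w}, Finset.card_pair hqw⟩ : PetersenVertex)).Adj (Sum.inl (⟨{s,w}, Finset.card_pair hsw⟩ : PetersenVertex)) (Sum.inl (⟨{p,r}, Finset.card_pair hpr⟩ : PetersenVertex)) := bplusAdj (pvAdj hps.symm hrs.symm hpw.symm hrw.symm) neA2u neA2v neC1u neC1v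
  have badjA2C3 : (Bplus (⟨{p,q}, Finset.card_pair hpq⟩ : PetersenVertex) (⟨{r,s}, Finset.card_pair hrs⟩ : PetersenVertex) (⟨{r,w}, Finset.card_pair hrw⟩ : PetersenVertex) (⟨{s,w}, Finset.card_pair hsw⟩ : PetersenVertex) (⟨{p,w}, Finset.card_pair hpw⟩ : PetersenVertex) (⟨{q,w}, Finset.card_pair hqw⟩ : PetersenVertex)).Adj (Sum.inl (⟨{s,w}, Finset.card_pair hsw⟩ : PetersenVertex)) (Sum.inl (⟨{q,r}, Finset.card_pair hqr⟩ : PetersenVertex)) := bplusAdj (pvAdj hqs.symm hrs.symm hqw.symm hrw.symm) neA2u neA2v neC3u neC3v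
  have badjB1C3 : (Bplus (⟨{p,q}, Finset.card_pair hpq⟩ : PetersenVertex) (⟨{r,s}, Finset.card_pair hrs⟩ : PetersenVertex) (⟨{r,w}, Finset.card_pair hrw⟩ : PetersenVertex) (⟨{s,w}, Finset.card_pair hsw⟩ : PetersenVertex) (⟨{p,w}, Finset.card_pair hpw⟩ : PetersenVertex) (⟨{q,w}, Finset.card_pair hqw⟩ : PetersenVertex)).Adj (Sum.inl (⟨{p,w}, Finset.card_pair hpw⟩ : PetersenVertex)) (Sum.inl (⟨{q,r}, Finset.card_pair hqr⟩ : PetersenVertex)) := bplusAdj (pvAdj hpq hpr hqw.symm hrw.symm) neB1u neB1v neC3u neC3v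
  have badjB1C4 : (Bplus (⟨{p,q}, Finset.card_pair hpq⟩ : PetersenVertex) (⟨{r,s}, Finset.card_pair hrs⟩ : PetersenVertex) (⟨{r,w}, Finset.card_pair hrw⟩ : PetersenVertex) (⟨{s,w}, Finset.card_pair hsw⟩ : PetersenVertex) (⟨{p,w}, Finset.card_pair hpw⟩ : PetersenVertex) (⟨{q,w}, Finset.card_pair hqw⟩ : PetersenVertex)).Adj (Sum.inl (⟨{p,w}, Finset.card_pair hpw⟩ : PetersenVertex)) (Sum.inl (⟨{q,s}, Finset.card_pair hqs⟩ : PetersenVertex)) := bplusAdj (pvAdj hpq hps hqw.symm hsw.symm) neB1u neB1v neC4u neC4v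
  have badjB2C1 : (Bplus (⟨{p,q}, Finset.card_pair hpq⟩ : PetersenVertex) (⟨{r,s}, Finset.card_pair hrs⟩ : PetersenVertex) (⟨{r,w}, Finset.card_pair hrw⟩ : PetersenVertex) (⟨{s,w}, Finset.card_pair hsw⟩ : PetersenVertex) (⟨{p,w}, Finset.card_pair hpw⟩ : PetersenVertex) (⟨{q,w}, Finset.card_pair hqw⟩ : PetersenVertex)).Adj (Sum.inl (⟨{q,w}, Finset.card_pair hqw⟩ : PetersenVertex)) (Sum.inl (⟨{p,r}, Finset.card_pair hpr⟩ : PetersenVertex)) := bplusAdj (pvAdj hpq.symm hqr hpw.symm hrw.symm) neB2u neB2v neC1u neC1v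
  have badjB2C2 : (Bplus (⟨{p,q}, Finset.card_pair hpq⟩ : PetersenVertex) (⟨{r,s}, Finset.card_pair hrs⟩ : PetersenVertex) (⟨{r,w}, Finset.card_pair hrw⟩ : PetersenVertex) (⟨{s,w}, Finset.card_pair hsw⟩ : PetersenVertex) (⟨{p,w}, Finset.card_pair hpw⟩ : PetersenVertex) (⟨{q,w}, Finset.card_pair hqw⟩ : PetersenVertex)).Adj (Sum.inl (⟨{q,w}, Finset.card_pair hqw⟩ : PetersenVertex)) (Sum.inl (⟨{p,s}, Finset.card_pair hps⟩ : PetersenVertex)) := bplusAdj (pvAdj hpq.symm hqs hpw.symm hsw.symm) neB2u neB2v neC2u neC2v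
  have badjC1C4 : (Bplus (⟨{p,q}, Finset.card_pair hpq⟩ : PetersenVertex) (⟨{r,s}, Finset.card_pair hrs⟩ : PetersenVertex) (⟨{r,w}, Finset.card_pair hrw⟩ : PetersenVertex) (⟨{s,w}, Finset.card_pair hsw⟩ : PetersenVertex) (⟨{p,w}, Finset.card_pair hpw⟩ : PetersenVertex) (⟨{q,w}, Finset.card_pair hqw⟩ : PetersenVertex)).Adj (Sum.inl (⟨{p,r}, Finset.card_pair hpr⟩ : PetersenVertex)) (Sum.inl (⟨{q,s}, Finset.card_pair hqs⟩ : PetersenVertex)) := bplusAdj (pvAdj hpq hps hqr.symm hrs) neC1u neC1v neC4u neC4v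
  have badjC2C3 : (Bplus (⟨{p,q}, Finset.card_pair hpq⟩ : PetersenVertex) (⟨{r,s}, Finset.card_pair hrs⟩ : PetersenVertex) (⟨{r,w}, Finset.card_pair hrw⟩ : PetersenVertex) (⟨{s,w}, Finset.card_pair hsw⟩ : PetersenVertex) (⟨{p,w}, Finset.card_pair hpw⟩ : PetersenVertex) (⟨{q,w}, Finset.card_pair hqw⟩ : PetersenVertex)).Adj (Sum.inl (⟨{p,s}, Finset.card_pair hps⟩ : PetersenVertex)) (Sum.inl (⟨{q,r}, Finset.card_pair hqr⟩ : PetersenVertex)) := bplusAdj (pvAdj hpq hpr hqs.symm hrs.symm) neC2u neC2v neC3u neC3v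
  have badjC1A2 : (Bplus (⟨{p,q}, Finset.card_pair hpq⟩ : PetersenVertex) (⟨{r,s}, Finset.card_pair hrs⟩ : PetersenVertex) (⟨{r,w}, Finset.card_pair hrw⟩ : PetersenVertex) (⟨{s,w}, Finset.card_pair hsw⟩ : PetersenVertex) (⟨{p,w}, Finset.card_pair hpw⟩ : PetersenVertex) (⟨{q,w}, Finset.card_pair hqw⟩ : PetersenVertex)).Adj (Sum.inl (⟨{p,r}, Finset.card_pair hpr⟩ : PetersenVertex)) (Sum.inl (⟨{s,w}, Finset.card_pair hsw⟩ : PetersenVertex)) := badjA2C1.symm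
  have badjC1B2 : (Bplus (⟨{p,q}, Finset.card_pair hpq⟩ : PetersenVertex) (⟨{r,s}, Finset.card_pair hrs⟩ : PetersenVertex) (⟨{r,w}, Finset.card_pair hrw⟩ : PetersenVertex) (⟨{s,w}, Finset.card_pair hsw⟩ : PetersenVertex) (⟨{p,w}, Finset.card_pair hpw⟩ : PetersenVertex) (⟨{q,w}, Finset.card_pair hqw⟩ : PetersenVertex)).Adj (Sum.inl (⟨{p,r}, Finset.card_pair hpr⟩ : PetersenVertex)) (Sum.inl (⟨{q,w}, Finset.card_pair hqw⟩ : PetersenVertex)) := badjB2C1.symm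
  have badjC2A1 : (Bplus (⟨{p,q}, Finset.card_pair hpq⟩ : PetersenVertex) (⟨{r,s}, Finset.card_pair hrs⟩ : PetersenVertex) (⟨{r,w}, Finset.card_pair hrw⟩ : PetersenVertex) (⟨{s,w}, Finset.card_pair hsw⟩ : PetersenVertex) (⟨{p,w}, Finset.card_pair hpw⟩ : PetersenVertex) (⟨{q,w}, Finset.card_pair hqw⟩ : PetersenVertex)).Adj (Sum.inl (⟨{p,s}, Finset.card_pair hps⟩ : PetersenVertex)) (Sum.inl (⟨{r,w}, Finset.card_pair hrw⟩ : PetersenVertex)) := badjA1C2.symm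
  have badjC2B2 : (Bplus (⟨{p,q}, Finset.card_pair hpq⟩ : PetersenVertex) (⟨{r,s}, Finset.card_pair hrs⟩ : PetersenVertex) (⟨{r,w}, Finset.card_pair hrw⟩ : PetersenVertex) (⟨{s,w}, Finset.card_pair hsw⟩ : PetersenVertex) (⟨{p,w}, Finset.card_pair hpw⟩ : PetersenVertex) (⟨{q,w}, Finset.card_pair hqw⟩ : PetersenVertex)).Adj (Sum.inl (⟨{p,s}, Finset.card_pair hps⟩ : PetersenVertex)) (Sum.inl (⟨{q,w}, Finset.card_pair hqw⟩ : PetersenVertex)) := badjB2C2.symm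
  have badjC3A2 : (Bplus (⟨{p,q}, Finset.card_pair hpq⟩ : PetersenVertex) (⟨{r,s}, Finset.card_pair hrs⟩ : PetersenVertex) (⟨{r,w}, Finset.card_pair hrw⟩ : PetersenVertex) (⟨{s,w}, Finset.card_pair hsw⟩ : PetersenVertex) (⟨{p,w}, Finset.card_pair hpw⟩ : PetersenVertex) (⟨{q,w}, Finset.card_pair hqw⟩ : PetersenVertex)).Adj (Sum.inl (⟨{q,r}, Finset.card_pair hqr⟩ : PetersenVertex)) (Sum.inl (⟨{s,w}, Finset.card_pair hsw⟩ : PetersenVertex)) := badjA2C3.symm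
  have badjC3B1 : (Bplus (⟨{p,q}, Finset.card_pair hpq⟩ : PetersenVertex) (⟨{r,s}, Finset.card_pair hrs⟩ : PetersenVertex) (⟨{r,w}, Finset.card_pair hrw⟩ : PetersenVertex) (⟨{s,w}, Finset.card_pair hsw⟩ : PetersenVertex) (⟨{p,w}, Finset.card_pair hpw⟩ : PetersenVertex) (⟨{q,w}, Finset.card_pair hqw⟩ : PetersenVertex)).Adj (Sum.inl (⟨{q,r}, Finset.card_pair hqr⟩ : PetersenVertex)) (Sum.inl (⟨{p,w}, Finset.card_pair hpw⟩ : PetersenVertex)) := badjB1C3.symm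
  have badjC3C2 : (Bplus (⟨{p,q}, Finset.card_pair hpq⟩ : PetersenVertex) (⟨{r,s}, Finset.card_pair hrs⟩ : PetersenVertex) (⟨{r,w}, Finset.card_pair hrw⟩ : PetersenVertex) (⟨{s,w}, Finset.card_pair hsw⟩ : PetersenVertex) (⟨{p,w}, Finset.card_pair hpw⟩ : PetersenVertex) (⟨{q,w}, Finset.card_pair hqw⟩ : PetersenVertex)).Adj (Sum.inl (⟨{q,r}, Finset.card_pair hqr⟩ : PetersenVertex)) (Sum.inl (⟨{p,s}, Finset.card_pair hps⟩ : PetersenVertex)) := badjC2C3.symm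
  have badjC4A1 : (Bplus (⟨{p,q}, Finset.card_pair hpq⟩ : PetersenVertex) (⟨{r,s}, Finset.card_pair hrs⟩ : PetersenVertex) (⟨{r,w}, Finset.card_pair hrw⟩ : PetersenVertex) (⟨{s,w}, Finset.card_pair hsw⟩ : PetersenVertex) (⟨{p,w}, Finset.card_pair hpw⟩ : PetersenVertex) (⟨{q,w}, Finset.card_pair hqw⟩ : PetersenVertex)).Adj (Sum.inl (⟨{q,s}, Finset.card_pair hqs⟩ : PetersenVertex)) (Sum.inl (⟨{r,w}, Finset.card_pair hrw⟩ : PetersenVertex)) := badjA1C4.symm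
  have badjC4B1 : (Bplus (⟨{p,q}, Finset.card_pair hpq⟩ : PetersenVertex) (⟨{r,s}, Finset.card_pair hrs⟩ : PetersenVertex) (⟨{r,w}, Finset.card_pair hrw⟩ : PetersenVertex) (⟨{s,w}, Finset.card_pair hsw⟩ : PetersenVertex) (⟨{p,w}, Finset.card_pair hpw⟩ : PetersenVertex) (⟨{q,w}, Finset.card_pair hqw⟩ : PetersenVertex)).Adj (Sum.inl (⟨{q,s}, Finset.card_pair hqs⟩ : PetersenVertex)) (Sum.inl (⟨{p,w}, Finset.card_pair hpw⟩ : PetersenVertex)) := badjB1C4.symm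
  have badjC4C1 : (Bplus (⟨{p,q}, Finset.card_pair hpq⟩ : PetersenVertex) (⟨{r,s}, Finset.card_pair hrs⟩ : PetersenVertex) (⟨{r,w}, Finset.card_pair hrw⟩ : PetersenVertex) (⟨{s,w}, Finset.card_pair hsw⟩ : PetersenVertex) (⟨{p,w}, Finset.card_pair hpw⟩ : PetersenVertex) (⟨{q,w}, Finset.card_pair hqw⟩ : PetersenVertex)).Adj (Sum.inl (⟨{q,s}, Finset.card_pair hqs⟩ : PetersenVertex)) (Sum.inl (⟨{p,r}, Finset.card_pair hpr⟩ : PetersenVertex)) := badjC1C4.symm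
  have badjA1P0 : (Bplus (⟨{p,q}, Finset.card_pair hpq⟩ : PetersenVertex) (⟨{r,s}, Finset.card_pair hrs⟩ : PetersenVertex) (⟨{r,w}, Finset.card_pair hrw⟩ : PetersenVertex) (⟨{s,w}, Finset.card_pair hsw⟩ : PetersenVertex) (⟨{p,w}, Finset.card_pair hpw⟩ : PetersenVertex) (⟨{q,w}, Finset.card_pair hqw⟩ : PetersenVertex)).Adj (Sum.inl (⟨{r,w}, Finset.card_pair hrw⟩ : PetersenVertex)) (Sum.inr 0) := bplusPend0
  have badjA2P1 : (Bplus (⟨{p,q}, Finset.card_pair hpq⟩ : PetersenVertex) (⟨{r,s}, Finset.card_pair hrs⟩ : PetersenVertex) (⟨{r,w}, Finset.card_pair hrw⟩ : PetersenVertex) (⟨{s,w}, Finset.card_pair hsw⟩ : PetersenVertex) (⟨{p,w}, Finset.card_pair hpw⟩ : PetersenVertex) (⟨{q,w}, Finset.card_pair hqw⟩ : PetersenVertex)).Adj (Sum.inl (⟨{s,w}, Finset.card_pair hsw⟩ : PetersenVertex)) (Sum.inr 1) := bplusPend1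
  have badjB1P2 : (Bplus (⟨{p,q}, Finset.card_pair hpq⟩ : PetersenVertex) (⟨{r,s}, Finset.card_pair hrs⟩ : PetersenVertex) (⟨{r,w}, Finset.card_pair hrw⟩ : PetersenVertex) (⟨{s,w}, Finset.card_pair hsw⟩ : PetersenVertex) (⟨{p,w}, Finset.card_pair hpw⟩ : PetersenVertex) (⟨{q,w}, Finset.card_pair hqw⟩ : PetersenVertex)).Adj (Sum.inl (⟨{p,w}, Finset.card_pair hpw⟩ : PetersenVertex)) (Sum.inr 2) := bplusPend2
  have badjB2P3 : (Bplus (⟨{p,q}, Finset.card_pair hpq⟩ : PetersenVertex) (⟨{r,s}, Finset.card_pair hrs⟩ : PetersenVertex) (⟨{r,w}, Finset.card_pair hrw⟩ : PetersenVertex) (⟨{s,w}, Finset.card_pair hsw⟩ : PetersenVertex) (⟨{p,w}, Finset.card_pair hpw⟩ : PetersenVertex) (⟨{q,w}, Finset.card_pair hqw⟩ : PetersenVertex)).Adj (Sum.inl (⟨{q,w}, Finset.card_pair hqw⟩ : PetersenVertex)) (Sum.inr 3) := bplusPend3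
  have nC2C4 : (Sum.inl (⟨{p,s}, Finset.card_pair hps⟩ : PetersenVertex) : PetersenVertex ⊕ Fin 4) ≠ Sum.inl (⟨{q,s}, Finset.card_pair hqs⟩ : PetersenVertex) := inlNe (pvNe1 hpq hps)
  have nC1C3 : (Sum.inl (⟨{p,r}, Finset.card_pair hpr⟩ : PetersenVertex) : PetersenVertex ⊕ Fin 4) ≠ Sum.inl (⟨{q,r}, Finset.card_pair hqr⟩ : PetersenVertex) := inlNe (pvNe1 hpq hpr)
  have nC3C4 : (Sum.inl (⟨{q,r}, Finset.card_pair hqr⟩ : PetersenVertex) : PetersenVertex ⊕ Fin 4) ≠ Sum.inl (⟨{q,s}, Finset.card_pair hqs⟩ : PetersenVertex) := inlNe (pvNe2 hqr.symm hrs)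
  have nC1C2 : (Sum.inl (⟨{p,r}, Finset.card_pair hpr⟩ : PetersenVertex) : PetersenVertex ⊕ Fin 4) ≠ Sum.inl (⟨{p,s}, Finset.card_pair hps⟩ : PetersenVertex) := inlNe (pvNe2 hpr.symm hrs)
  have nA2B2 : (Sum.inl (⟨{s,w}, Finset.card_pair hsw⟩ : PetersenVertex) : PetersenVertex ⊕ Fin 4) ≠ Sum.inl (⟨{q,w}, Finset.card_pair hqw⟩ : PetersenVertex) := inlNe (pvNe1 hqs.symm hsw)
  have nA2C4 : (Sum.inl (⟨{s,w}, Finset.card_pair hsw⟩ : PetersenVertex) : PetersenVertex ⊕ Fin 4) ≠ Sum.inl (⟨{q,s}, Finset.card_pair hqs⟩ : PetersenVertex) := inlNe (pvNe2 hqw.symm hsw.symm)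
  have nB2C4 : (Sum.inl (⟨{q,w}, Finset.card_pair hqw⟩ : PetersenVertex) : PetersenVertex ⊕ Fin 4) ≠ Sum.inl (⟨{q,s}, Finset.card_pair hqs⟩ : PetersenVertex) := inlNe (pvNe2 hqw.symm hsw.symm)
  have nA1B2 : (Sum.inl (⟨{r,w}, Finset.card_pair hrw⟩ : PetersenVertex) : PetersenVertex ⊕ Fin 4) ≠ Sum.inl (⟨{q,w}, Finset.card_pair hqw⟩ : PetersenVertex) := inlNe (pvNe1 hqr.symm hrw)
  have nA1C3 : (Sum.inl (⟨{r,w}, Finset.card_pair hrw⟩ : PetersenVertex) : PetersenVertex ⊕ Fin 4) ≠ Sum.inl (⟨{q,r}, Finset.card_pair hqr⟩ : PetersenVertex) := inlNe (pvNe2 hqw.symm hrw.symm)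
  have nB2C3 : (Sum.inl (⟨{q,w}, Finset.card_pair hqw⟩ : PetersenVertex) : PetersenVertex ⊕ Fin 4) ≠ Sum.inl (⟨{q,r}, Finset.card_pair hqr⟩ : PetersenVertex) := inlNe (pvNe2 hqw.symm hrw.symm)
  have nA2B1 : (Sum.inl (⟨{s,w}, Finset.card_pair hsw⟩ : PetersenVertex) : PetersenVertex ⊕ Fin 4) ≠ Sum.inl (⟨{p,w}, Finset.card_pair hpw⟩ : PetersenVertex) := inlNe (pvNe1 hps.symm hsw)
  have nA2C2 : (Sum.inl (⟨{s,w}, Finset.card_pair hsw⟩ : PetersenVertex) : PetersenVertex ⊕ Fin 4) ≠ Sum.inl (⟨{p,s}, Finset.card_pair hps⟩ : PetersenVertex) := inlNe (pvNe2 hpw.symm hsw.symm)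
  have nB1C2 : (Sum.inl (⟨{p,w}, Finset.card_pair hpw⟩ : PetersenVertex) : PetersenVertex ⊕ Fin 4) ≠ Sum.inl (⟨{p,s}, Finset.card_pair hps⟩ : PetersenVertex) := inlNe (pvNe2 hpw.symm hsw.symm)
  have nA1B1 : (Sum.inl (⟨{r,w}, Finset.card_pair hrw⟩ : PetersenVertex) : PetersenVertex ⊕ Fin 4) ≠ Sum.inl (⟨{p,w}, Finset.card_pair hpw⟩ : PetersenVertex) := inlNe (pvNe1 hpr.symm hrw)
  have nA1C1 : (Sum.inl (⟨{r,w}, Finset.card_pair hrw⟩ : PetersenVertex) : PetersenVertex ⊕ Fin 4) ≠ Sum.inl (⟨{p,r}, Finset.card_pair hpr⟩ : PetersenVertex) := inlNe (pvNe2 hpw.symm hrw.symm)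
  have nB1C1 : (Sum.inl (⟨{p,w}, Finset.card_pair hpw⟩ : PetersenVertex) : PetersenVertex ⊕ Fin 4) ≠ Sum.inl (⟨{p,r}, Finset.card_pair hpr⟩ : PetersenVertex) := inlNe (pvNe2 hpw.symm hrw.symm)
  have k1 : phi s(Sum.inl (⟨{r,w}, Finset.card_pair hrw⟩ : PetersenVertex), Sum.inl (⟨{p,s}, Finset.card_pair hps⟩ : PetersenVertex)) ≠ phi s(Sum.inl (⟨{r,w}, Finset.card_pair hrw⟩ : PetersenVertex), Sum.inl (⟨{q,s}, Finset.card_pair hqs⟩ : PetersenVertex)) := key hphi badjA1C2 badjA1C4 nC2C4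
  have k2 : phi s(Sum.inl (⟨{s,w}, Finset.card_pair hsw⟩ : PetersenVertex), Sum.inl (⟨{p,r}, Finset.card_pair hpr⟩ : PetersenVertex)) ≠ phi s(Sum.inl (⟨{s,w}, Finset.card_pair hsw⟩ : PetersenVertex), Sum.inl (⟨{q,r}, Finset.card_pair hqr⟩ : PetersenVertex)) := key hphi badjA2C1 badjA2C3 nC1C3
  have k3 : phi s(Sum.inl (⟨{p,w}, Finset.card_pair hpw⟩ : PetersenVertex), Sum.inl (⟨{q,r}, Finset.card_pair hqr⟩ : PetersenVertex)) ≠ phi s(Sum.inl (⟨{p,w}, Finset.card_pair hpw⟩ : PetersenVertex), Sum.inl (⟨{q,s}, Finset.card_pair hqs⟩ : PetersenVertex)) := key hphi badjB1C3 badjB1C4 nC3C4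
  have k4 : phi s(Sum.inl (⟨{q,w}, Finset.card_pair hqw⟩ : PetersenVertex), Sum.inl (⟨{p,r}, Finset.card_pair hpr⟩ : PetersenVertex)) ≠ phi s(Sum.inl (⟨{q,w}, Finset.card_pair hqw⟩ : PetersenVertex), Sum.inl (⟨{p,s}, Finset.card_pair hps⟩ : PetersenVertex)) := key hphi badjB2C1 badjB2C2 nC1C2
  have k5 : phi s(Sum.inl (⟨{s,w}, Finset.card_pair hsw⟩ : PetersenVertex), Sum.inl (⟨{p,r}, Finset.card_pair hpr⟩ : PetersenVertex)) ≠ phi s(Sum.inl (⟨{q,w}, Finset.card_pair hqw⟩ : PetersenVertex), Sum.inl (⟨{p,r}, Finset.card_pair hpr⟩ : PetersenVertex)) := keyC hphi badjC1A2 badjC1B2 nA2B2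
  have k6 : phi s(Sum.inl (⟨{s,w}, Finset.card_pair hsw⟩ : PetersenVertex), Sum.inl (⟨{p,r}, Finset.card_pair hpr⟩ : PetersenVertex)) ≠ phi s(Sum.inl (⟨{p,r}, Finset.card_pair hpr⟩ : PetersenVertex), Sum.inl (⟨{q,s}, Finset.card_pair hqs⟩ : PetersenVertex)) := keyB hphi badjC1A2 badjC1C4 nA2C4
  have k7 : phi s(Sum.inl (⟨{q,w}, Finset.card_pair hqw⟩ : PetersenVertex), Sum.inl (⟨{p,r}, Finset.card_pair hpr⟩ : PetersenVertex)) ≠ phi s(Sum.inl (⟨{p,r}, Finset.card_pair hpr⟩ : PetersenVertex), Sum.inl (⟨{q,s}, Finset.card_pair hqs⟩ : PetersenVertex)) := keyB hphi badjC1B2 badjC1C4 nB2C4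
  have k8 : phi s(Sum.inl (⟨{r,w}, Finset.card_pair hrw⟩ : PetersenVertex), Sum.inl (⟨{p,s}, Finset.card_pair hps⟩ : PetersenVertex)) ≠ phi s(Sum.inl (⟨{q,w}, Finset.card_pair hqw⟩ : PetersenVertex), Sum.inl (⟨{p,s}, Finset.card_pair hps⟩ : PetersenVertex)) := keyC hphi badjC2A1 badjC2B2 nA1B2
  have k9 : phi s(Sum.inl (⟨{r,w}, Finset.card_pair hrw⟩ : PetersenVertex), Sum.inl (⟨{p,s}, Finset.card_pair hps⟩ : PetersenVertex)) ≠ phi s(Sum.inl (⟨{p,s}, Finset.card_pair hps⟩ : PetersenVertex), Sum.inl (⟨{q,r}, Finset.card_pair hqr⟩ : PetersenVertex)) := keyB hphi badjC2A1 badjC2C3 nA1C3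
  have k10 : phi s(Sum.inl (⟨{q,w}, Finset.card_pair hqw⟩ : PetersenVertex), Sum.inl (⟨{p,s}, Finset.card_pair hps⟩ : PetersenVertex)) ≠ phi s(Sum.inl (⟨{p,s}, Finset.card_pair hps⟩ : PetersenVertex), Sum.inl (⟨{q,r}, Finset.card_pair hqr⟩ : PetersenVertex)) := keyB hphi badjC2B2 badjC2C3 nB2C3
  have k11 : phi s(Sum.inl (⟨{s,w}, Finset.card_pair hsw⟩ : PetersenVertex), Sum.inl (⟨{q,r}, Finset.card_pair hqr⟩ : PetersenVertex)) ≠ phi s(Sum.inl (⟨{p,w}, Finset.card_pair hpw⟩ : PetersenVertex), Sum.inl (⟨{q,r}, Finset.card_pair hqr⟩ : PetersenVertex)) := keyC hphi badjC3A2 badjC3B1 nA2B1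
  have k12 : phi s(Sum.inl (⟨{s,w}, Finset.card_pair hsw⟩ : PetersenVertex), Sum.inl (⟨{q,r}, Finset.card_pair hqr⟩ : PetersenVertex)) ≠ phi s(Sum.inl (⟨{p,s}, Finset.card_pair hps⟩ : PetersenVertex), Sum.inl (⟨{q,r}, Finset.card_pair hqr⟩ : PetersenVertex)) := keyC hphi badjC3A2 badjC3C2 nA2C2
  have k13 : phi s(Sum.inl (⟨{p,w}, Finset.card_pair hpw⟩ : PetersenVertex), Sum.inl (⟨{q,r}, Finset.card_pair hqr⟩ : PetersenVertex)) ≠ phi s(Sum.inl (⟨{p,s}, Finset.card_pair hps⟩ : PetersenVertex), Sum.inl (⟨{q,r}, Finset.card_pair hqr⟩ : PetersenVertex)) := keyC hphi badjC3B1 badjC3C2 nB1C2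
  have k14 : phi s(Sum.inl (⟨{r,w}, Finset.card_pair hrw⟩ : PetersenVertex), Sum.inl (⟨{q,s}, Finset.card_pair hqs⟩ : PetersenVertex)) ≠ phi s(Sum.inl (⟨{p,w}, Finset.card_pair hpw⟩ : PetersenVertex), Sum.inl (⟨{q,s}, Finset.card_pair hqs⟩ : PetersenVertex)) := keyC hphi badjC4A1 badjC4B1 nA1B1
  have k15 : phi s(Sum.inl (⟨{r,w}, Finset.card_pair hrw⟩ : PetersenVertex), Sum.inl (⟨{q,s}, Finset.card_pair hqs⟩ : PetersenVertex)) ≠ phi s(Sum.inl (⟨{p,r}, Finset.card_pair hpr⟩ : PetersenVertex), Sum.inl (⟨{q,s}, Finset.card_pair hqs⟩ : PetersenVertex)) := keyC hphi badjC4A1 badjC4C1 nA1C1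
  have k16 : phi s(Sum.inl (⟨{p,w}, Finset.card_pair hpw⟩ : PetersenVertex), Sum.inl (⟨{q,s}, Finset.card_pair hqs⟩ : PetersenVertex)) ≠ phi s(Sum.inl (⟨{p,r}, Finset.card_pair hpr⟩ : PetersenVertex), Sum.inl (⟨{q,s}, Finset.card_pair hqs⟩ : PetersenVertex)) := keyC hphi badjC4B1 badjC4C1 nB1C1
  have kP0a : phi s(Sum.inl (⟨{r,w}, Finset.card_pair hrw⟩ : PetersenVertex), Sum.inl (⟨{p,s}, Finset.card_pair hps⟩ : PetersenVertex)) ≠ phi s(Sum.inl (⟨{r,w}, Finset.card_pair hrw⟩ : PetersenVertex), Sum.inr 0) := key hphi badjA1C2 badjA1P0 Sum.inl_ne_inr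
  have kP0b : phi s(Sum.inl (⟨{r,w}, Finset.card_pair hrw⟩ : PetersenVertex), Sum.inl (⟨{q,s}, Finset.card_pair hqs⟩ : PetersenVertex)) ≠ phi s(Sum.inl (⟨{r,w}, Finset.card_pair hrw⟩ : PetersenVertex), Sum.inr 0) := key hphi badjA1C4 badjA1P0 Sum.inl_ne_inr
  have kP1a : phi s(Sum.inl (⟨{s,w}, Finset.card_pair hsw⟩ : PetersenVertex), Sum.inl (⟨{p,r}, Finset.card_pair hpr⟩ : PetersenVertex)) ≠ phi s(Sum.inl (⟨{s,w}, Finset.card_pair hsw⟩ : PetersenVertex), Sum.inr 1) := key hphi badjA2C1 badjA2P1 Sum.inl_ne_inr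
  have kP1b : phi s(Sum.inl (⟨{s,w}, Finset.card_pair hsw⟩ : PetersenVertex), Sum.inl (⟨{q,r}, Finset.card_pair hqr⟩ : PetersenVertex)) ≠ phi s(Sum.inl (⟨{s,w}, Finset.card_pair hsw⟩ : PetersenVertex), Sum.inr 1) := key hphi badjA2C3 badjA2P1 Sum.inl_ne_inr
  have kP2a : phi s(Sum.inl (⟨{p,w}, Finset.card_pair hpw⟩ : PetersenVertex), Sum.inl (⟨{q,r}, Finset.card_pair hqr⟩ : PetersenVertex)) ≠ phi s(Sum.inl (⟨{p,w}, Finset.card_pair hpw⟩ : PetersenVertex), Sum.inr 2) := key hphi badjB1C3 badjB1P2 Sum.inl_ne_inr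
  have kP2b : phi s(Sum.inl (⟨{p,w}, Finset.card_pair hpw⟩ : PetersenVertex), Sum.inl (⟨{q,s}, Finset.card_pair hqs⟩ : PetersenVertex)) ≠ phi s(Sum.inl (⟨{p,w}, Finset.card_pair hpw⟩ : PetersenVertex), Sum.inr 2) := key hphi badjB1C4 badjB1P2 Sum.inl_ne_inr
  have kP3a : phi s(Sum.inl (⟨{q,w}, Finset.card_pair hqw⟩ : PetersenVertex), Sum.inl (⟨{p,r}, Finset.card_pair hpr⟩ : PetersenVertex)) ≠ phi s(Sum.inl (⟨{q,w}, Finset.card_pair hqw⟩ : PetersenVertex), Sum.inr 3) := key hphi badjB2C1 badjB2P3 Sum.inl_ne_inr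
  have kP3b : phi s(Sum.inl (⟨{q,w}, Finset.card_pair hqw⟩ : PetersenVertex), Sum.inl (⟨{p,s}, Finset.card_pair hps⟩ : PetersenVertex)) ≠ phi s(Sum.inl (⟨{q,w}, Finset.card_pair hqw⟩ : PetersenVertex), Sum.inr 3) := key hphi badjB2C2 badjB2P3 Sum.inl_ne_inr
  have g0 : phi s(Sum.inl (⟨{r,w}, Finset.card_pair hrw⟩ : PetersenVertex), Sum.inr 0) = other (phi s(Sum.inl (⟨{r,w}, Finset.card_pair hrw⟩ : PetersenVertex), Sum.inl (⟨{p,s}, Finset.card_pair hps⟩ : PetersenVertex))) (phi s(Sum.inl (⟨{r,w}, Finset.card_pair hrw⟩ : PetersenVertex), Sum.inl (⟨{q,s}, Finset.card_pair hqs⟩ : PetersenVertex))) := thirdEq k1 kP0a.symm kP0b.symm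
  have g1 : phi s(Sum.inl (⟨{s,w}, Finset.card_pair hsw⟩ : PetersenVertex), Sum.inr 1) = other (phi s(Sum.inl (⟨{s,w}, Finset.card_pair hsw⟩ : PetersenVertex), Sum.inl (⟨{p,r}, Finset.card_pair hpr⟩ : PetersenVertex))) (phi s(Sum.inl (⟨{s,w}, Finset.card_pair hsw⟩ : PetersenVertex), Sum.inl (⟨{q,r}, Finset.card_pair hqr⟩ : PetersenVertex))) := thirdEq k2 kP1a.symm kP1b.symm
  have g2 : phi s(Sum.inl (⟨{p,w}, Finset.card_pair hpw⟩ : PetersenVertex), Sum.inr 2) = other (phi s(Sum.inl (⟨{p,w}, Finset.card_pair hpw⟩ : PetersenVertex), Sum.inl (⟨{q,r}, Finset.card_pair hqr⟩ : PetersenVertex))) (phi s(Sum.inl (⟨{p,w}, Finset.card_pair hpw⟩ : PetersenVertex), Sum.inl (⟨{q,s}, Finset.card_pair hqs⟩ : PetersenVertex))) := thirdEq k3 kP2a.symm kP2b.symm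
  have g3 : phi s(Sum.inl (⟨{q,w}, Finset.card_pair hqw⟩ : PetersenVertex), Sum.inr 3) = other (phi s(Sum.inl (⟨{q,w}, Finset.card_pair hqw⟩ : PetersenVertex), Sum.inl (⟨{p,r}, Finset.card_pair hpr⟩ : PetersenVertex))) (phi s(Sum.inl (⟨{q,w}, Finset.card_pair hqw⟩ : PetersenVertex), Sum.inl (⟨{p,s}, Finset.card_pair hps⟩ : PetersenVertex))) := thirdEq k4 kP3a.symm kP3b.symm
  obtain ⟨hc1, hc2⟩ := core (phi s(Sum.inl (⟨{r,w}, Finset.card_pair hrw⟩ : PetersenVertex), Sum.inl (⟨{p,s}, Finset.card_pair hps⟩ : PetersenVertex))) (phi s(Sum.inl (⟨{r,w}, Finset.card_pair hrw⟩ : PetersenVertex), Sum.inl (⟨{q,s}, Finset.card_pair hqs⟩ : PetersenVertex))) (phi s(Sum.inl (⟨{s,w}, Finset.card_pair hsw⟩ : PetersenVertex), Sum.inl (⟨{p,r}, Finset.card_pair hpr⟩ : PetersenVertex))) (phi s(Sum.inl (⟨{s,w}, Finset.card_pair hsw⟩ : PetersenVertex), Sum.inl (⟨{q,r}, Finset.card_pair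 hqr⟩ : PetersenVertex))) (phi s(Sum.inl (⟨{p,w}, Finset.card_pair hpw⟩ : PetersenVertex), Sum.inl (⟨{q,r}, Finset.card_pair hqr⟩ : PetersenVertex))) (phi s(Sum.inl (⟨{p,w}, Finset.card_pair hpw⟩ : PetersenVertex), Sum.inl (⟨{q,s}, Finset.card_pair hqs⟩ : PetersenVertex))) (phi s(Sum.inl (⟨{q,w}, Finset.card_pair hqw⟩ : PetersenVertex), Sum.inl (⟨{p,r}, Finset.card_pair hpr⟩ : PetersenVertex))) (phi s(Sum.inl (⟨{q,w}, Finset.card_pair hqw⟩ : PetersenVertex), Sum.inl (⟨{p,s}, Finset.card_pair hps⟩ : PetersenVertex))) (phi s(Sum.inl (⟨{p,r}, Finset.card_pair hpr⟩ : PetersenVertex), Sum.inl (⟨{q,s}, Finset.card_pair hqs⟩ : PetersenVertex))) (phi s(Sum.inl (⟨{p,s}, Finset.card_pair hps⟩ : PetersenVertex), Sum.inl (⟨{q,r}, Finset.card_pair hqr⟩ : PetersenVertex))) ⟨k1,k2,k3,k4,k5,k6,k7,k8,k9,k10,k11,k12,k13,k14,k15,k16⟩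
  exact ⟨g0.trans (hc1.trans g1.symm), g2.trans (hc2.trans g3.symm)⟩


theorem memLem : ∀ p q r s w x : Fin 5, p ≠ q → r ≠ p → r ≠ q → s ≠ p → s ≠ q → w ≠ p →
    w ≠ q → r ≠ s → r ≠ w → s ≠ w → x ≠ p → x ≠ q → (x = r ∨ x = s ∨ x = w) := by decide

theorem exW : ∀ p q r s : Fin 5, p ≠ q → p ≠ r → p ≠ s → q ≠ r → q ≠ s → r ≠ s →
    ∃ w, w ≠ p ∧ w ≠ q ∧ w ≠ r ∧ w ≠ s := by decide

lemma shape {t : PetersenVertex} {p q r s w : Fin 5} (hpq : p ≠ q)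
    (hrp : r ≠ p) (hrq : r ≠ q) (hsp : s ≠ p) (hsq : s ≠ q) (hwp : w ≠ p) (hwq : w ≠ q)
    (hrs : r ≠ s) (hrw : r ≠ w) (hsw : s ≠ w)
    (hd : Disjoint ({p,q} : Finset (Fin 5)) t.1) (hne : t.1 ≠ {r,s}) :
    t.1 = {r,w} ∨ t.1 = {s,w} := by
  obtain ⟨x, y, hxy, ht⟩ := Finset.card_eq_two.mp t.2
  rw [ht] at hd hne ⊢
  obtain ⟨hpx, hpy, hqx, hqy⟩ := disjPair hd
  have hx := memLem p q r s w x hpq hrp hrq hsp hsq hwp hwq hrs hrw hsw hpx.symm hqx.symm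
  have hy := memLem p q r s w y hpq hrp hrq hsp hsq hwp hwq hrs hrw hsw hpy.symm hqy.symm
  rcases hx with rfl | rfl | rfl <;> rcases hy with rfl | rfl | rfl
  · exact absurd rfl hxy
  · exact absurd rfl hne
  · exact Or.inl rfl
  · exact absurd (Finset.pair_comm x y).symm hne.symm
  · exact absurd rfl hxy
  · exact Or.inr rfl
  · exact Or.inl (Finset.pair_comm x y)
  · exact Or.inr (Finset.pair_comm x y)
  · exact absurd rfl hxy


theorem stmt5 (u v a₁ a₂ b₁ b₂ : PetersenVertex)
    (huv : Petersen.Adj u v)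
    (hua₁ : Petersen.Adj u a₁) (hua₂ : Petersen.Adj u a₂)
    (ha : a₁ ≠ a₂) (ha₁v : a₁ ≠ v) (ha₂v : a₂ ≠ v)
    (hvb₁ : Petersen.Adj v b₁) (hvb₂ : Petersen.Adj v b₂)
    (hb : b₁ ≠ b₂) (hb₁u : b₁ ≠ u) (hb₂u : b₂ ≠ u)
    (phi : Sym2 (PetersenVertex ⊕ Fin 4) → Fin 3)
    (hphi : IsProper3EdgeColoring (Bplus u v a₁ a₂ b₁ b₂) phi) :
    phi s(Sum.inl a₁, Sum.inr 0) = phi s(Sum.inl a₂, Sum.inr 1) ∧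
    phi s(Sum.inl b₁, Sum.inr 2) = phi s(Sum.inl b₂, Sum.inr 3) := by
  have hduv : Disjoint u.1 v.1 := huv
  have hdua₁ : Disjoint u.1 a₁.1 := hua₁
  have hdua₂ : Disjoint u.1 a₂.1 := hua₂
  have hdvb₁ : Disjoint v.1 b₁.1 := hvb₁
  have hdvb₂ : Disjoint v.1 b₂.1 := hvb₂
  obtain ⟨p, q, hpq, hu⟩ := Finset.card_eq_two.mp u.2
  obtain ⟨r, s, hrs, hv⟩ := Finset.card_eq_two.mp v.2
  rw [hu, hv] at hduv
  obtain ⟨hpr, hps, hqr, hqs⟩ := disjPair hduv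
  obtain ⟨w, hwp, hwq, hwr, hws⟩ := exW p q r s hpq hpr hps hqr hqs hrs
  rw [hu] at hdua₁ hdua₂
  rw [hv] at hdvb₁ hdvb₂
  have hna₁ : a₁.1 ≠ {r,s} := fun h => ha₁v (Subtype.ext (h.trans hv.symm))
  have hna₂ : a₂.1 ≠ {r,s} := fun h => ha₂v (Subtype.ext (h.trans hv.symm))
  have hnb₁ : b₁.1 ≠ {p,q} := fun h => hb₁u (Subtype.ext (h.trans hu.symm))
  have hnb₂ : b₂.1 ≠ {p,q} := fun h => hb₂u (Subtype.ext (h.trans hu.symm))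
  have sa₁ := shape hpq hpr.symm hqr.symm hps.symm hqs.symm hwp hwq hrs hwr.symm hws.symm hdua₁ hna₁
  have sa₂ := shape hpq hpr.symm hqr.symm hps.symm hqs.symm hwp hwq hrs hwr.symm hws.symm hdua₂ hna₂
  have sb₁ := shape hrs hpr hps hqr hqs hwr hws hpq hwp.symm hwq.symm hdvb₁ hnb₁
  have sb₂ := shape hrs hpr hps hqr hqs hwr hws hpq hwp.symm hwq.symm hdvb₂ hnb₂
  rcases sa₁ with h1 | h1 <;> rcases sa₂ with h2 | h2
  · exact absurd (Subtype.ext (h1.trans h2.symm)) ha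
  case inl.inr =>
    rcases sb₁ with h3 | h3 <;> rcases sb₂ with h4 | h4
    · exact absurd (Subtype.ext (h3.trans h4.symm)) hb
    · exact main u v a₁ a₂ b₁ b₂ p q r s w hpq hpr hps hwp.symm hqr hqs hwq.symm hrs hwr.symm hws.symm (Subtype.ext hu) (Subtype.ext hv) (Subtype.ext h1) (Subtype.ext h2) (Subtype.ext h3) (Subtype.ext h4) phi hphi
    · exact main u v a₁ a₂ b₁ b₂ q p r s w hpq.symm hqr hqs hwq.symm hpr hps hwp.symm hrs hwr.symm hws.symm (Subtype.ext (hu.trans (Finset.pair_comm p q))) (Subtype.ext hv) (Subtype.ext h1) (Subtype.ext h2) (Subtype.ext h3) (Subtype.ext h4) phi hphi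
    · exact absurd (Subtype.ext (h3.trans h4.symm)) hb
  case inr.inl =>
    rcases sb₁ with h3 | h3 <;> rcases sb₂ with h4 | h4
    · exact absurd (Subtype.ext (h3.trans h4.symm)) hb
    · exact main u v a₁ a₂ b₁ b₂ p q s r w hpq hps hpr hwp.symm hqs hqr hwq.symm hrs.symm hws.symm hwr.symm (Subtype.ext hu) (Subtype.ext (hv.trans (Finset.pair_comm r s))) (Subtype.ext h1) (Subtype.ext h2) (Subtype.ext h3) (Subtype.ext h4) phi hphi
    · exact main u v a₁ a₂ b₁ b₂ q p s r w hpq.symm hqs hqr hwq.symm hps hpr hwp.symm hrs.symm hws.symm hwr.symm (Subtype.ext (hu.trans (Finset.pair_comm p q))) (Subtype.ext (hv.trans (Finset.pair_comm r s))) (Subtype.ext h1) (Subtype.ext h2) (Subtype.ext h3) (Subtype.ext h4) phi hphi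
    · exact absurd (Subtype.ext (h3.trans h4.symm)) hb
  · exact absurd (Subtype.ext (h1.trans h2.symm)) ha
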